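/- arXiv:1206.6673 — 3 statements merged into one kernel-verified Lean document; each statement's English description precedes it below -/
import Mathlib

section
/- For all integers N ≥ 1 and l with 0 ≤ l ≤ N, one has Σ_{n=1}^{N} cos((2n−1) l π/N) / (1 − cos((2n−1) π/N)) = N²/2 − N l. -/
/-!
Write `θₙ = (2n - 1)π / N` and `A l = ∑ₙ cos (l θₙ) / (1 - cos θₙ)`. Since
`cos ((l + 2)θ) - 2 cos ((l + 1)θ) + cos (lθ) = -2 (1 - cos θ) cos ((l + 1)θ)`, the second difference
of `A` is `-2 ∑ₙ cos ((l + 1)θₙ)`, which vanishes for `0 < l + 1 < N` because the angles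
`(l + 1)θₙ` are equally spaced around the circle. Hence `A` is affine on `[0, N]`, with slope
`A 1 - A 0 = -N`. Finally `cos (Nθₙ) = cos ((2n - 1)π) = -1` gives `A N = -A 0`, so `A 0 = N² / 2`.
-/

open Real Finset

theorem Real.cos_add_two_mul (a x : ℝ) :
    cos ((a + 2) * x) = 2 * cos x * cos ((a + 1) * x) - cos (a * x) := by
  have h₁ := cos_add ((a + 1) * x) x
  have h₂ := cos_sub ((a + 1) * x) x
  ring_nf at h₁ h₂ ⊢
  linarith

theorem eq_add_mul_of_sub_two_mul_add_eq_zero {f : ℕ → ℝ} {N : ℕ}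
    (h : ∀ l, l + 2 ≤ N → f (l + 2) - 2 * f (l + 1) + f l = 0) :
    ∀ l ≤ N, f l = f 0 + l * (f 1 - f 0) := by
  intro l
  induction l using Nat.strong_induction_on with
  | _ l ih =>
    rcases l with _ | _ | l
    · simp
    · simp
    · intro hl
      show f (l + 2) = _
      have hrec := h l hl
      rw [ih l (by omega) (by omega), ih (l + 1) (by omega) (by omega)] at hrec
      push_cast at hrec ⊢
      linear_combination hrec

section CosQuotSum

variable {ι : Type*} {s : Finset ι} {θ : ι → ℝ}

variable (s θ) in
noncomputable def cosQuotSum (x : ℝ) : ℝ :=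
  ∑ i ∈ s, cos (x * θ i) / (1 - cos (θ i))

theorem cosQuotSum_add_two (hθ : ∀ i ∈ s, cos (θ i) ≠ 1) (x : ℝ) :
    cosQuotSum s θ (x + 2) - 2 * cosQuotSum s θ (x + 1) + cosQuotSum s θ x =
      -2 * ∑ i ∈ s, cos ((x + 1) * θ i) := by
  rw [cosQuotSum, cosQuotSum, cosQuotSum, mul_sum, mul_sum, ← sum_sub_distrib,
    ← sum_add_distrib]
  refine sum_congr rfl fun i hi ↦ ?_
  have : 1 - cos (θ i) ≠ 0 := sub_ne_zero.2 (hθ i hi).symm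
  rw [cos_add_two_mul]
  field_simp
  ring

theorem cosQuotSum_one (hθ : ∀ i ∈ s, cos (θ i) ≠ 1) :
    cosQuotSum s θ 1 = cosQuotSum s θ 0 - #s := by
  rw [cosQuotSum, cosQuotSum, card_eq_sum_ones, Nat.cast_sum, ← sum_sub_distrib]
  refine sum_congr rfl fun i hi ↦ ?_
  have : 1 - cos (θ i) ≠ 0 := sub_ne_zero.2 (hθ i hi).symm
  simp only [one_mul, zero_mul, cos_zero, Nat.cast_one]
  field_simp
  ring

end CosQuotSum

theorem cos_odd_mul_pi_div_ne_one {N n : ℕ} (hn : 1 ≤ n) (hnN : n ≤ N) :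
    cos ((2 * n - 1) * π / N) ≠ 1 := by
  have hn' : (1 : ℝ) ≤ n := by exact_mod_cast hn
  have hN : (0 : ℝ) < N := by exact_mod_cast hn.trans hnN
  have hnN' : (n : ℝ) ≤ N := by exact_mod_cast hnN
  have hpos : 0 < (2 * n - 1) * π / N := by
    have : (0 : ℝ) < 2 * n - 1 := by linarith
    positivity
  have hlt : (2 * n - 1) * π / N < 2 * π := by
    rw [div_lt_iff₀ hN]
    nlinarith [pi_pos]
  rw [Ne, cos_eq_one_iff_of_lt_of_lt (by linarith) hlt]
  exact hpos.ne'

theorem cos_mul_odd_mul_pi_div_self {N : ℕ} (hN : N ≠ 0) (n : ℕ) :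
    cos (N * ((2 * n - 1) * π / N)) = -1 := by
  have h : (N : ℝ) * ((2 * n - 1) * π / N) = ((n : ℤ) - 1 : ℤ) * (2 * π) + π := by
    field_simp
    push_cast
    ring
  rw [h, cos_int_mul_two_pi_add_pi]

theorem sum_cos_mul_odd_mul_pi_div {N k : ℕ} (hk : 0 < k) (hkN : k < N) :
    ∑ n ∈ Icc 1 N, cos (k * ((2 * n - 1) * π / N)) = 0 := by
  have hN : (0 : ℝ) < N := by exact_mod_cast hk.trans hkN
  have hsin : sin (2 * π * k / N / 2) ≠ 0 := by
    refine (sin_pos_of_pos_of_lt_pi (by positivity) ?_).ne'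
    rw [div_div, div_lt_iff₀ (by positivity)]
    have : (k : ℝ) < N := by exact_mod_cast hkN
    nlinarith [pi_pos]
  -- `sin (a / 2) * ∑ cos (a * i + b)` telescopes to `sin (N * a / 2) * _`, and here `N * a / 2 = kπ`.
  have h := sin_mul_sum_cos N (2 * π * k / N) (π * k / N)
  rw [show N * (2 * π * k / N) / 2 = k * π by field_simp, sin_nat_mul_pi, zero_mul,
    mul_eq_zero_iff_left hsin] at h
  rw [← Ico_add_one_right_eq_Icc, sum_Ico_eq_sum_range, add_tsub_cancel_right, ← h]
  refine sum_congr rfl fun n _ ↦ congrArg cos ?_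
  push_cast
  field_simp
  ring

theorem minc_scott_sum (N l : ℕ) (hN : 1 ≤ N) (hl : l ≤ N) :
    ∑ n ∈ Finset.Icc 1 N,
      Real.cos ((2 * n - 1 : ℝ) * l * Real.pi / N) /
        (1 - Real.cos ((2 * n - 1 : ℝ) * Real.pi / N))
    = (N : ℝ) ^ 2 / 2 - (N : ℝ) * l := by
  set A := cosQuotSum (Icc 1 N) fun n : ℕ ↦ (2 * n - 1 : ℝ) * π / N
  have hθ : ∀ n ∈ Icc 1 N, cos ((2 * n - 1 : ℝ) * π / N) ≠ 1 := fun n hn ↦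
    cos_odd_mul_pi_div_ne_one (mem_Icc.1 hn).1 (mem_Icc.1 hn).2
  have hA : ∀ m ≤ N, A m = A 0 + m * (A 1 - A 0) := by
    simpa using eq_add_mul_of_sub_two_mul_add_eq_zero (f := fun m : ℕ ↦ A m) fun m hm ↦ by
      have h := sum_cos_mul_odd_mul_pi_div (N := N) (k := m + 1) (by omega) (by omega)
      push_cast at h ⊢
      rw [cosQuotSum_add_two hθ, h, mul_zero]
  have h1 : A 1 = A 0 - N := by
    simpa using cosQuotSum_one hθ
  have hAN : A N = -A 0 := by
    simp only [A, cosQuotSum, cos_mul_odd_mul_pi_div_self (by omega : N ≠ 0), zero_mul, cos_zero,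
      neg_div, sum_neg_distrib]
  have hA0 : A 0 = N ^ 2 / 2 := by
    have h := hA N le_rfl
    rw [hAN, h1] at h
    linear_combination (-1 / 2 : ℝ) * h
  calc _ = A l := sum_congr rfl fun n _ ↦ by congr 2; ring
    _ = _ := by rw [hA l hl, h1, hA0]; ring
end

section
/- Let N be a positive even integer, and let m, l be integers with 1 ≤ m ≤ l ≤ N/2. Then T^t_{2m}(l) = (1/2) · Σ_{s=1}^{m-1} (−1)^{s+1} · ( l/(l+s) ) · C(l+s, l−s) · 2^{2s} · T^t_{2(m−s)} + (−1)^{m+1} · 2^{2m−1} · ( (l+m−1)! / ( (l−m)! · (2m)! ) ) · l, where the first sum is empty when m = 1. -/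
/-!
Put `x = sin² θ`. Since `2 cos 2θ = 2 - 4x`, the Vieta–Lucas identity `C_l(2 cos φ) = 2 cos lφ`
at `φ = 2θ` writes `sin² lθ` as a polynomial `∑_{s=1}^{l} c_{l,s} x^s`, where the coefficients of
`C_l(X + 2)` are `C(l+s, 2s) + C(l+s-1, 2s) = 2l/(l+s) · C(l+s, l-s)`. Divide by `x^m` at
`θ = nπ/N` and sum with the signs `(-1)^(n+1)`: the terms `s < m` give the twisted sums
`T^t_{2(m-s)}`, the term `s = m` gives `∑ (-1)^(n+1) = 1`, and the terms `s > m` vanish, because for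
`2j < N` the function `(-1)^n sin^{2j}(nπ/N)` is a combination of the powers `ζ^{ne}`,
`N/2 - j ≤ e ≤ N/2 + j`, of the primitive `N`-th root of unity `ζ = exp(2πi/N)`.
-/

open Real Finset

theorem Finset.sum_range_succ_eq_add_sum_Icc {M : Type*} [AddCommMonoid M] (f : ℕ → M) (n : ℕ) :
    ∑ i ∈ range (n + 1), f i = f 0 + ∑ i ∈ Icc 1 n, f i := by
  rw [range_eq_Ico, sum_eq_sum_Ico_succ_bot (by omega), zero_add, Ico_add_one_right_eq_Icc]

theorem Finset.sum_Icc_one_eq_add_of_eq_zero {M : Type*} [AddCommMonoid M] {f : ℕ → M}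
    {m l : ℕ} (hm : 1 ≤ m) (hml : m ≤ l) (hf : ∀ s ∈ Ioc m l, f s = 0) :
    ∑ s ∈ Icc 1 l, f s = ∑ s ∈ Icc 1 (m - 1), f s + f m := by
  obtain ⟨k, rfl⟩ := Nat.exists_eq_add_one.2 hm
  have hIcc (n : ℕ) : Icc 1 n = Ioc 0 n := Icc_add_one_left_eq_Ioc 0 n
  rw [hIcc, hIcc, ← sum_Ioc_consecutive _ (Nat.zero_le (k + 1)) hml, sum_eq_zero hf, add_zero,
    sum_Ioc_succ_top (Nat.zero_le k), Nat.add_sub_cancel]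

/-- The coefficient of `X ^ s` in `C_n(X + 2)`; truncated subtraction gives the right value
`vietaLucasCoeff 0 0 = 2`. -/
def vietaLucasCoeff (n s : ℕ) : ℕ := (n + s).choose (2 * s) + (n + s - 1).choose (2 * s)

theorem vietaLucasCoeff_zero_right (n : ℕ) : vietaLucasCoeff n 0 = 2 := by
  simp [vietaLucasCoeff]

theorem vietaLucasCoeff_eq_zero {n s : ℕ} (h : n < s) : vietaLucasCoeff n s = 0 := by
  simp only [vietaLucasCoeff, Nat.add_eq_zero_iff]
  exact ⟨Nat.choose_eq_zero_of_lt (by omega), Nat.choose_eq_zero_of_lt (by omega)⟩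

theorem vietaLucasCoeff_succ_left (n s : ℕ) :
    vietaLucasCoeff (n + 1) s = (n + s + 1).choose (2 * s) + (n + s).choose (2 * s) := by
  simp [vietaLucasCoeff, Nat.add_right_comm n 1 s]

theorem vietaLucasCoeff_succ_right (n s : ℕ) :
    vietaLucasCoeff n (s + 1) =
      (n + s + 1).choose (2 * s + 2) + (n + s).choose (2 * s + 2) := by
  simp [vietaLucasCoeff, ← add_assoc, mul_add]

theorem Nat.choose_add_two_add_choose (k j : ℕ) :
    (k + 2).choose (j + 2) + k.choose (j + 2) = 2 * (k + 1).choose (j + 2) + k.choose j := by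
  rw [show k + 2 = k + 1 + 1 from rfl, show j + 2 = j + 1 + 1 from rfl,
    Nat.choose_succ_succ' (k + 1), Nat.choose_succ_succ' k j, Nat.choose_succ_succ' k (j + 1)]
  ring

theorem vietaLucasCoeff_add_two (n s : ℕ) :
    vietaLucasCoeff (n + 2) (s + 1) + vietaLucasCoeff n (s + 1) =
      vietaLucasCoeff (n + 1) s + 2 * vietaLucasCoeff (n + 1) (s + 1) := by
  have h₁ := Nat.choose_add_two_add_choose (n + s + 1) (2 * s)
  have h₂ := Nat.choose_add_two_add_choose (n + s) (2 * s)
  simp only [vietaLucasCoeff_succ_right, vietaLucasCoeff_succ_left,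
    show n + 2 + s = n + s + 1 + 1 by omega, show n + 1 + s = n + s + 1 by omega] at h₁ h₂ ⊢
  ring_nf at h₁ h₂ ⊢
  omega

namespace Polynomial.Chebyshev

variable (R : Type*) [CommRing R]

theorem coeff_C_comp_X_add_two (n s : ℕ) :
    ((C R n).comp (X + 2)).coeff s = vietaLucasCoeff n s := by
  induction n using Nat.twoStepInduction generalizing s with
  | zero =>
    rcases s with _ | s
    · simp [vietaLucasCoeff_zero_right]
    · simp [vietaLucasCoeff_eq_zero (Nat.succ_pos s)]
  | one =>
    rcases s with _ | _ | s
    · simp [vietaLucasCoeff_zero_right]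
    · simp [vietaLucasCoeff, coeff_X]
    · simp [vietaLucasCoeff_eq_zero (show 1 < s + 2 by omega), coeff_X]
  | more n ih₁ ih₂ =>
    have hC : C R ((n + 2 : ℕ) : ℤ) = X * C R ((n + 1 : ℕ) : ℤ) - C R (n : ℤ) := by
      exact_mod_cast C_add_two R n
    rw [hC, sub_comp, mul_comp, X_comp, coeff_sub, add_mul, coeff_add, mul_comm 2, coeff_mul_ofNat]
    cases s with
    | zero =>
      simp only [mul_coeff_zero, coeff_X_zero, zero_mul, zero_add, ih₁, ih₂,
        vietaLucasCoeff_zero_right]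
      norm_num
    | succ s =>
      rw [coeff_X_mul, ih₁, ih₂, ih₂]
      have h := congrArg (Nat.cast (R := R)) (vietaLucasCoeff_add_two n s)
      push_cast at h
      linear_combination -h

end Polynomial.Chebyshev

open Polynomial Polynomial.Chebyshev in
theorem two_mul_cos_nat_mul_eq_sum (l : ℕ) (φ : ℝ) :
    2 * cos (l * φ) = ∑ s ∈ range (l + 1), (vietaLucasCoeff l s : ℝ) * (2 * cos φ - 2) ^ s := by
  have hdeg : ((C ℝ l).comp (X + 2)).natDegree < l + 1 :=
    Nat.lt_succ_of_le <| natDegree_le_iff_coeff_eq_zero.2 fun s hs => by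
      rw [coeff_C_comp_X_add_two, vietaLucasCoeff_eq_zero hs, Nat.cast_zero]
  calc 2 * cos (l * φ) = (C ℝ l).eval (2 * cos φ) := by simp
    _ = ((C ℝ l).comp (X + 2)).eval (2 * cos φ - 2) := by simp
    _ = _ := by simp only [eval_eq_sum_range' hdeg, coeff_C_comp_X_add_two]

noncomputable def sinSqCoeff (l s : ℕ) : ℝ :=
  (-1) ^ (s + 1) * 2 ^ (2 * s) / 4 * vietaLucasCoeff l s

theorem sin_sq_nat_mul_eq_sum (l : ℕ) (θ : ℝ) :
    sin (l * θ) ^ 2 = ∑ s ∈ Icc 1 l, sinSqCoeff l s * sin θ ^ (2 * s) := by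
  have hcos (x : ℝ) : 2 * cos (2 * x) = 2 - 4 * sin x ^ 2 := by rw [cos_two_mul, cos_sq']; ring
  have h := two_mul_cos_nat_mul_eq_sum l (2 * θ)
  rw [mul_left_comm, hcos, hcos, sum_range_succ_eq_add_sum_Icc, vietaLucasCoeff_zero_right,
    pow_zero, Nat.cast_ofNat, mul_one] at h
  have hterm (s : ℕ) : sinSqCoeff l s * sin θ ^ (2 * s)
      = -((vietaLucasCoeff l s : ℝ) * (2 - 4 * sin θ ^ 2 - 2) ^ s) / 4 := by
    rw [sinSqCoeff, show (2 : ℝ) - 4 * sin θ ^ 2 - 2 = -1 * 2 ^ 2 * sin θ ^ 2 by ring, mul_pow,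
      mul_pow, ← pow_mul, ← pow_mul]
    ring
  simp only [hterm, ← sum_div, sum_neg_distrib]
  linarith

theorem mul_vietaLucasCoeff {n s : ℕ} (hs : s ≤ n) :
    (n + s) * vietaLucasCoeff n s = 2 * n * (n + s).choose (n - s) := by
  rw [Nat.choose_symm_of_eq_add (by omega : n + s = n - s + 2 * s)]
  rcases Nat.eq_zero_or_pos (n + s) with h0 | hpos
  · obtain ⟨rfl, rfl⟩ : n = 0 ∧ s = 0 := by omega
    simp
  obtain ⟨k, hk⟩ := Nat.exists_eq_add_one.2 hpos
  have h := Nat.choose_mul_succ_eq k (2 * s)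
  rw [show k + 1 - 2 * s = n - s by omega] at h
  rw [vietaLucasCoeff, hk, Nat.add_sub_cancel]
  zify [hs] at h hk ⊢
  linear_combination h - ((k + 1).choose (2 * s) : ℤ) * hk

theorem sinSqCoeff_eq_choose {l s : ℕ} (hs : 1 ≤ s) (hsl : s ≤ l) :
    sinSqCoeff l s =
      (-1) ^ (s + 1) * ((l : ℝ) / (l + s)) * (l + s).choose (l - s) * 2 ^ (2 * s) / 2 := by
  have h : ((l : ℝ) + s) * vietaLucasCoeff l s = 2 * l * (l + s).choose (l - s) := by
    exact_mod_cast mul_vietaLucasCoeff hsl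
  have hpos : (l : ℝ) + s ≠ 0 := by positivity
  have ha : (vietaLucasCoeff l s : ℝ) = 2 * l * (l + s).choose (l - s) / (l + s) := by
    rw [eq_div_iff hpos, ← h, mul_comm]
  rw [sinSqCoeff, ha]
  ring

theorem sinSqCoeff_eq_factorial {l s : ℕ} (hs : 1 ≤ s) (hsl : s ≤ l) :
    sinSqCoeff l s = (-1) ^ (s + 1) * 2 ^ (2 * s - 1) *
      ((l + s - 1).factorial / ((l - s).factorial * (2 * s).factorial) : ℝ) * l := by
  have hfac : ((l + s).factorial : ℝ) = (l + s : ℝ) * (l + s - 1).factorial := by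
    rw [← Nat.mul_factorial_pred (by omega : l + s ≠ 0)]
    push_cast
    ring
  have hpow : (2 : ℝ) ^ (2 * s) = 2 * 2 ^ (2 * s - 1) := by
    rw [← pow_succ', Nat.sub_add_cancel (by omega)]
  have hpos : (l : ℝ) + s ≠ 0 := by positivity
  rw [sinSqCoeff_eq_choose hs hsl, Nat.cast_choose ℝ (by omega : l - s ≤ l + s),
    show l + s - (l - s) = 2 * s by omega, hfac, hpow]
  field_simp

theorem IsPrimitiveRoot.sum_range_pow_pow_eq_zero {R : Type*} [CommRing R] [IsDomain R]
    {ζ : R} {N e : ℕ} (h : IsPrimitiveRoot ζ N) (he : ¬ N ∣ e) :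
    ∑ n ∈ range N, (ζ ^ n) ^ e = 0 := by
  simp_rw [← pow_mul, mul_comm _ e, pow_mul]
  refine eq_zero_of_ne_zero_of_mul_left_eq_zero
    (sub_ne_zero_of_ne (Ne.symm (mt (h.pow_eq_one_iff_dvd e).1 he))) ?_
  rw [mul_neg_geom_sum, ← pow_mul, mul_comm, pow_mul, h.pow_eq_one, one_pow, sub_self]

namespace Complex

theorem exp_mul_I_sq_sub_one (x : ℂ) :
    exp (x * I) ^ 2 - 1 = 2 * I * exp (x * I) * sin x := by
  rw [Complex.sin, neg_mul, exp_neg]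
  field_simp
  ring_nf
  rw [I_sq]
  ring

theorem neg_one_pow_mul_sin_pow_eq {K j : ℕ} (n : ℕ) (hK : K ≠ 0) (hj : j ≤ K) :
    (-1) ^ n * sin (n * π / (K + K)) ^ (2 * j) =
      (-1 / 4) ^ j * ((exp (2 * π * I / (K + K)) ^ n) ^ (K - j) *
        (exp (2 * π * I / (K + K)) ^ n - 1) ^ (2 * j)) := by
  have hK' : (K : ℂ) ≠ 0 := Nat.cast_ne_zero.2 hK
  set x : ℂ := n * π / (K + K)
  have hζn : exp (2 * π * I / (K + K)) ^ n = exp (x * I) ^ 2 := by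
    rw [← exp_nat_mul, ← exp_nat_mul]
    congr 1
    simp only [x]
    ring
  have hsign : (exp (x * I) ^ 2) ^ (K - j) * exp (x * I) ^ (2 * j) = (-1) ^ n := by
    rw [← pow_mul, ← pow_add, show 2 * (K - j) + 2 * j = K + K by omega, ← exp_nat_mul,
      show ((K + K : ℕ) : ℂ) * (x * I) = n * (π * I) by simp only [x]; push_cast; field_simp,
      exp_nat_mul, exp_pi_mul_I]
  have h4 : (-1 / 4 : ℂ) ^ j * (-4) ^ j = 1 := by rw [← mul_pow]; norm_num
  rw [hζn, exp_mul_I_sq_sub_one, ← hsign, mul_pow _ (sin x), mul_pow _ (exp _), pow_mul (2 * I),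
    mul_pow 2 I, I_sq]
  linear_combination (-(exp (x * I) ^ 2) ^ (K - j) * exp (x * I) ^ (2 * j) * sin x ^ (2 * j)) * h4

end Complex

theorem sum_range_neg_one_pow_mul_sin_pow_eq_zero {N j : ℕ} (hN : Even N) (hj : 2 * j < N) :
    ∑ n ∈ range N, (-1 : ℝ) ^ n * sin (n * π / N) ^ (2 * j) = 0 := by
  obtain ⟨K, rfl⟩ := hN
  set ζ : ℂ := Complex.exp (2 * π * Complex.I / (K + K))
  have hζ : IsPrimitiveRoot ζ (K + K) := by
    simpa using Complex.isPrimitiveRoot_exp (K + K) (by omega)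
  apply Complex.ofReal_injective
  push_cast
  rw [sum_congr rfl fun n _ => Complex.neg_one_pow_mul_sin_pow_eq n (by omega) (by omega),
    ← mul_sum]
  refine mul_eq_zero_of_right _ ?_
  calc ∑ n ∈ range (K + K), (ζ ^ n) ^ (K - j) * (ζ ^ n - 1) ^ (2 * j)
      = ∑ r ∈ range (2 * j + 1), (-1) ^ (r + 2 * j) * ((2 * j).choose r : ℂ) *
          ∑ n ∈ range (K + K), (ζ ^ n) ^ (K - j + r) := by
        simp_rw [sub_pow, one_pow, mul_one, mul_sum, pow_add]
        rw [sum_comm]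
        exact sum_congr rfl fun r _ => sum_congr rfl fun n _ => by ring
    _ = 0 := sum_eq_zero fun r hr => by
        rw [hζ.sum_range_pow_pow_eq_zero (Nat.not_dvd_of_pos_of_lt (by omega) (by grind)), mul_zero]

theorem sum_Icc_neg_one_pow_succ_mul_sin_pow {N j : ℕ} (hN : Even N) (hj : 2 * j < N) :
    ∑ n ∈ Icc 1 (N - 1), (-1 : ℝ) ^ (n + 1) * sin (n * π / N) ^ (2 * j) =
      if j = 0 then 1 else 0 := by
  have h := sum_range_neg_one_pow_mul_sin_pow_eq_zero hN hj
  obtain ⟨M, rfl⟩ := Nat.exists_eq_add_one.2 (by omega : 0 < N)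
  rw [sum_range_succ_eq_add_sum_Icc, CharP.cast_eq_zero, zero_mul, zero_div, sin_zero, pow_zero,
    one_mul, zero_pow_eq] at h
  simp only [mul_eq_zero, two_ne_zero, false_or] at h
  simp only [pow_succ, mul_neg_one, neg_mul, sum_neg_distrib, Nat.add_sub_cancel]
  split_ifs at h ⊢ <;> linarith

theorem sin_nat_mul_pi_div_ne_zero {N n : ℕ} (hn : n ∈ Icc 1 (N - 1)) :
    sin (n * π / N) ≠ 0 := by
  rw [mem_Icc] at hn
  have hnN : (n : ℝ) < N := by exact_mod_cast (by omega : n < N)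
  have hN : (0 : ℝ) < N := by exact_mod_cast (by omega : 0 < N)
  have hn0 : (0 : ℝ) < n := by exact_mod_cast hn.1
  refine (sin_pos_of_pos_of_lt_pi (div_pos (mul_pos hn0 pi_pos) hN) ?_).ne'
  rw [div_lt_iff₀ hN, mul_comm]
  exact mul_lt_mul_of_pos_left hnN pi_pos

theorem sum_Icc_neg_one_pow_succ_mul_sin_pow_div_of_le {N s m : ℕ} (hsm : s ≤ m) :
    ∑ n ∈ Icc 1 (N - 1),
        (-1 : ℝ) ^ (n + 1) * sin (n * π / N) ^ (2 * s) / sin (n * π / N) ^ (2 * m) =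
      ∑ n ∈ Icc 1 (N - 1), (-1 : ℝ) ^ (n + 1) / sin (n * π / N) ^ (2 * (m - s)) := by
  refine sum_congr rfl fun n hn => ?_
  rw [show 2 * m = 2 * (m - s) + 2 * s by omega, pow_add (sin _),
    mul_div_mul_right _ _ (pow_ne_zero _ (sin_nat_mul_pi_div_ne_zero hn))]

theorem sum_Icc_neg_one_pow_succ_mul_sin_pow_div_of_ge {N s m : ℕ} (hN : Even N) (hms : m ≤ s)
    (hsN : 2 * (s - m) < N) :
    ∑ n ∈ Icc 1 (N - 1),
        (-1 : ℝ) ^ (n + 1) * sin (n * π / N) ^ (2 * s) / sin (n * π / N) ^ (2 * m) =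
      if s = m then 1 else 0 := by
  simp only [show s = m ↔ s - m = 0 by omega, ← sum_Icc_neg_one_pow_succ_mul_sin_pow hN hsN]
  refine sum_congr rfl fun n hn => ?_
  rw [show 2 * s = 2 * (s - m) + 2 * m by omega, pow_add (sin _), ← mul_assoc,
    mul_div_cancel_right₀ _ (pow_ne_zero _ (sin_nat_mul_pi_div_ne_zero hn))]

theorem sum_Icc_neg_one_pow_succ_mul_sin_sq_nat_mul_div (N l m : ℕ) :
    ∑ n ∈ Icc 1 (N - 1),
        (-1 : ℝ) ^ (n + 1) * sin (n * l * π / N) ^ 2 / sin (n * π / N) ^ (2 * m) =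
      ∑ s ∈ Icc 1 l, sinSqCoeff l s * ∑ n ∈ Icc 1 (N - 1),
        (-1 : ℝ) ^ (n + 1) * sin (n * π / N) ^ (2 * s) / sin (n * π / N) ^ (2 * m) := by
  simp_rw [mul_sum]
  rw [sum_comm]
  refine sum_congr rfl fun n _ => ?_
  rw [show (n : ℝ) * l * π / N = l * (n * π / N) by ring, sin_sq_nat_mul_eq_sum, mul_sum, sum_div]
  exact sum_congr rfl fun s _ => by ring

theorem twisted_T2m_l_recursion_general (N m l : ℕ) (hNeven : Even N)
    (hm : 1 ≤ m) (hml : m ≤ l) (hl : l ≤ N / 2) :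
    (∑ n ∈ Finset.Icc 1 (N - 1), (-1 : ℝ) ^ (n + 1) *
        (Real.sin (n * l * Real.pi / N)) ^ 2 / (Real.sin (n * Real.pi / N)) ^ (2 * m))
    = (1 / 2) * ∑ s ∈ Finset.Icc 1 (m - 1),
        (-1 : ℝ) ^ (s + 1) * ((l : ℝ) / ((l : ℝ) + s)) * (Nat.choose (l + s) (l - s)) *
          2 ^ (2 * s) *
          (∑ n ∈ Finset.Icc 1 (N - 1), (-1 : ℝ) ^ (n + 1) /
            (Real.sin (n * Real.pi / N)) ^ (2 * (m - s)))
      + (-1 : ℝ) ^ (m + 1) * 2 ^ (2 * m - 1) *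
          ((Nat.factorial (l + m - 1) : ℝ) /
            ((Nat.factorial (l - m) : ℝ) * (Nat.factorial (2 * m) : ℝ))) * l := by
  rw [sum_Icc_neg_one_pow_succ_mul_sin_sq_nat_mul_div, sum_Icc_one_eq_add_of_eq_zero hm hml
    fun s hs => by
      rw [mem_Ioc] at hs
      rw [sum_Icc_neg_one_pow_succ_mul_sin_pow_div_of_ge hNeven (by omega) (by omega),
        if_neg (by omega), mul_zero],
    sum_Icc_neg_one_pow_succ_mul_sin_pow_div_of_ge hNeven le_rfl (by omega), if_pos rfl, mul_one,
    sinSqCoeff_eq_factorial hm hml, mul_sum]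
  congr 1
  refine sum_congr rfl fun s hs => ?_
  rw [mem_Icc] at hs
  rw [sum_Icc_neg_one_pow_succ_mul_sin_pow_div_of_le (by omega),
    sinSqCoeff_eq_choose hs.1 (by omega)]
  ring

theorem twisted_T2m_l_recursion (N m l : ℕ) (hN : 0 < N) (hNeven : Even N)
    (hm : 1 ≤ m) (hml : m ≤ l) (hl : l ≤ N / 2) :
    (∑ n ∈ Finset.Icc 1 (N - 1), (-1 : ℝ) ^ (n + 1) *
        (Real.sin (n * l * Real.pi / N)) ^ 2 / (Real.sin (n * Real.pi / N)) ^ (2 * m))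
    = (1 / 2) * ∑ s ∈ Finset.Icc 1 (m - 1),
        (-1 : ℝ) ^ (s + 1) * ((l : ℝ) / ((l : ℝ) + s)) * (Nat.choose (l + s) (l - s)) *
          2 ^ (2 * s) *
          (∑ n ∈ Finset.Icc 1 (N - 1), (-1 : ℝ) ^ (n + 1) /
            (Real.sin (n * Real.pi / N)) ^ (2 * (m - s)))
      + (-1 : ℝ) ^ (m + 1) * 2 ^ (2 * m - 1) *
          ((Nat.factorial (l + m - 1) : ℝ) /
            ((Nat.factorial (l - m) : ℝ) * (Nat.factorial (2 * m) : ℝ))) * l :=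
  twisted_T2m_l_recursion_general N m l hNeven hm hml hl
end

section
/- Let N ≥ 3 be an odd integer and l an integer with 1 ≤ l ≤ (N−1)/2. Then Σ_{n=1}^{N-1} (−1)^n · ( sin(2nlπ/N) / sin(nπ/N) ) · ( sin(4nlπ/N) / sin(2nπ/N) ) = −(1/2)·3l·(3l−1) + (1/2)·l·(l−1) − l + ε, where ε = N·( 3l − (N+1)/2 + (1/2)(1−(−1)^{l−(N+1)/2}) ) if 3l > (N+1)/2, and ε = 0 otherwise. -/
/-!
With `θ = nπ/N`, `N = 2s + 1` and `ζ = e^{2πi/N}`, the Dirichlet-kernel identity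
`sin (mθ) / sin θ = ∑_{j<m} e^{i(m-1-2j)θ}` together with `(-1)^n = e^{iNθ}` writes the `n`-th
summand as `∑_{j,k<2l} (ζ^{c(j,k)})^n` with `c(j,k) = s + 3l - 1 - j - 2k`. Summing over
`1 ≤ n < N`, each pair contributes `N - 1` if `N ∣ c(j,k)` and `-1` otherwise. As `-N < c < 2N`,
this happens exactly for `c = 0` or `c = N`; the reflection `(j,k) ↦ (2l-1-j, 2l-1-k)` turns
`c` into `N - c`, and `c = N` means `j + 2k = 3l - s - 2`, which has `⌊(3l - s)/2⌋` solutions.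
So the sum is `2N⌊(3l - s)/2⌋ - 4l²`, and the closed form is this expression sorted by parity.
-/

open Real Finset

theorem Complex.sin_nat_mul_eq_sin_mul_sum_exp (m : ℕ) (x : ℂ) :
    Complex.sin (m * x) =
      Complex.sin x * ∑ j ∈ range m, Complex.exp (((m : ℤ) - 1 - 2 * j : ℤ) * x * Complex.I) := by
  set f : ℕ → ℂ := fun j => Complex.exp (((m : ℤ) - 2 * j : ℤ) * x * Complex.I) * Complex.I / 2
  have telescope (j : ℕ) :
      Complex.sin x * Complex.exp (((m : ℤ) - 1 - 2 * j : ℤ) * x * Complex.I) = f (j + 1) - f j := by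
    rw [Complex.sin, div_mul_eq_mul_div, mul_right_comm, sub_mul, ← Complex.exp_add,
      ← Complex.exp_add]
    simp only [f]
    push_cast
    ring_nf
  rw [mul_sum, sum_congr rfl fun j _ => telescope j, sum_range_sub]
  simp only [f, Complex.sin]
  push_cast
  ring_nf

theorem Complex.sin_nat_mul_div_sin {x : ℂ} (hx : Complex.sin x ≠ 0) (m : ℕ) :
    Complex.sin (m * x) / Complex.sin x =
      ∑ j ∈ range m, Complex.exp (((m : ℤ) - 1 - 2 * j : ℤ) * x * Complex.I) := by
  rw [sin_nat_mul_eq_sin_mul_sum_exp, mul_div_cancel_left₀ _ hx]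

theorem Complex.sin_nat_mul_pi_div_ne_zero {N a : ℕ} (hN : N ≠ 0) (ha : ¬ N ∣ a) :
    Complex.sin (a * π / N) ≠ 0 := by
  rw [Ne, Complex.sin_eq_zero_iff]
  rintro ⟨k, hk⟩
  rw [div_eq_iff (Nat.cast_ne_zero.mpr hN), mul_right_comm,
    mul_left_inj' (by exact_mod_cast Real.pi_ne_zero)] at hk
  exact ha (Int.natCast_dvd_natCast.mp ⟨k, by exact_mod_cast hk.trans (mul_comm _ _)⟩)

theorem geom_sum_of_pow_eq_one {K : Type*} [Field K] [DecidableEq K] {u : K} {N : ℕ}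
    (hu : u ^ N = 1) : ∑ n ∈ range N, u ^ n = if u = 1 then (N : K) else 0 := by
  split_ifs with h
  · simp [h]
  · rw [geom_sum_eq h, hu, sub_self, zero_div]

theorem IsPrimitiveRoot.sum_Ico_one_pow_zpow {K : Type*} [Field K] [DecidableEq K] {ζ : K}
    {N : ℕ} (hζ : IsPrimitiveRoot ζ N) (hN : 1 ≤ N) (c : ℤ) :
    ∑ n ∈ Ico 1 N, (ζ ^ c) ^ n = (if (N : ℤ) ∣ c then (N : K) else 0) - 1 := by
  have hu : (ζ ^ c) ^ N = 1 := by
    rw [← zpow_natCast, ← zpow_mul, mul_comm, zpow_mul, zpow_natCast, hζ.pow_eq_one, one_zpow]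
  simp [sum_Ico_eq_sub _ hN, geom_sum_of_pow_eq_one hu, hζ.zpow_eq_one_iff_dvd]

theorem card_filter_range_product_reflect (m : ℕ) (P : ℕ × ℕ → Prop) [DecidablePred P] :
    #{p ∈ range m ×ˢ range m | P (m - 1 - p.1, m - 1 - p.2)} =
      #{p ∈ range m ×ˢ range m | P p} := by
  simp only [card_filter, sum_product]
  conv_rhs => rw [← sum_range_reflect]
  exact sum_congr rfl fun j _ => sum_range_reflect (fun k => if P (m - 1 - j, k) then 1 else 0) m

theorem card_filter_add_two_mul_eq {m t : ℕ} (ht : t < m) :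
    #{p ∈ range m ×ˢ range m | p.1 + 2 * p.2 = t} = t / 2 + 1 := by
  rw [← card_range (t / 2 + 1)]
  refine card_nbij' Prod.snd (fun k => (t - 2 * k, k)) ?_ ?_ ?_ ?_ <;> intro p hp <;>
    simp only [coe_filter, coe_range, Set.mem_Iio, mem_product, mem_range, Set.mem_ofPred_eq,
      Prod.ext_iff, and_true] at hp ⊢ <;> omega

/-- The exponent `(N + (2l-1-2j) + 2(2l-1-2k)) / 2` for `N = 2s + 1` and `p = (j, k)`. -/
def pairExponent (s l : ℕ) (p : ℕ × ℕ) : ℤ := s + 3 * l - 1 - p.1 - 2 * p.2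

theorem neg_one_pow_mul_sin_ratio_mul_sin_ratio {N s : ℕ} (hs : N = 2 * s + 1) (l : ℕ) {n : ℕ}
    (hn1 : 1 ≤ n) (hn2 : n < N) :
    (-1 : ℂ) ^ n * (Complex.sin (2 * n * l * π / N) / Complex.sin (n * π / N)) *
        (Complex.sin (4 * n * l * π / N) / Complex.sin (2 * n * π / N)) =
      ∑ p ∈ range (2 * l) ×ˢ range (2 * l),
        (Complex.exp (2 * π * Complex.I / N) ^ pairExponent s l p) ^ n := by
  have hN : N ≠ 0 := by omega
  have hsin : Complex.sin (n * π / N) ≠ 0 :=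
    Complex.sin_nat_mul_pi_div_ne_zero hN (Nat.not_dvd_of_pos_of_lt hn1 hn2)
  have hsin_two_mul : Complex.sin ((2 * n : ℕ) * π / N) ≠ 0 := by
    refine Complex.sin_nat_mul_pi_div_ne_zero hN fun hdvd => ?_
    have := Nat.eq_of_dvd_of_lt_two_mul (by omega) hdvd (by omega)
    omega
  have e1 : Complex.sin (2 * n * l * π / N) = Complex.sin ((2 * l : ℕ) * (n * π / N)) := by
    push_cast; ring_nf
  have e2 : Complex.sin (4 * n * l * π / N) =
      Complex.sin ((2 * l : ℕ) * ((2 * n : ℕ) * π / N)) := by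
    push_cast; ring_nf
  have e3 : Complex.sin (2 * n * π / N) = Complex.sin ((2 * n : ℕ) * π / N) := by
    push_cast; ring_nf
  rw [e1, e2, e3, Complex.sin_nat_mul_div_sin hsin, Complex.sin_nat_mul_div_sin hsin_two_mul,
    mul_assoc, sum_mul_sum, ← sum_product', mul_sum]
  refine sum_congr rfl fun p _ => ?_
  rw [← Complex.exp_pi_mul_I, ← Complex.exp_nat_mul, ← Complex.exp_add, ← Complex.exp_add,
    ← Complex.exp_int_mul, ← Complex.exp_nat_mul]
  congr 1
  have hNC : (N : ℂ) = 2 * s + 1 := by exact_mod_cast hs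
  field_simp
  simp only [pairExponent]
  push_cast
  rw [hNC]
  ring

theorem card_filter_dvd_pairExponent {N s l : ℕ} (hs : N = 2 * s + 1) (hl : l ≤ s) :
    #{p ∈ range (2 * l) ×ˢ range (2 * l) | (N : ℤ) ∣ pairExponent s l p} =
      if s + 1 < 3 * l then 2 * ((3 * l - s) / 2) else 0 := by
  set R := range (2 * l) ×ˢ range (2 * l)
  have hmem {p : ℕ × ℕ} (hp : p ∈ R) : p.1 < 2 * l ∧ p.2 < 2 * l := by
    simpa [R] using hp
  have hdvd : {p ∈ R | (N : ℤ) ∣ pairExponent s l p} =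
      {p ∈ R | p.1 + 2 * p.2 = s + 3 * l - 1} ∪ {p ∈ R | p.1 + 2 * p.2 + s + 2 = 3 * l} := by
    rw [← filter_or]
    refine filter_congr fun p hp => ?_
    have := hmem hp
    simp only [pairExponent]
    refine ⟨fun ⟨q, hq⟩ => ?_, ?_⟩
    · -- `-N < pairExponent s l p < 2N`
      have hq : q = 0 ∨ q = 1 := by
        have : -1 < q ∧ q < 2 := by subst hs; push_cast at hq; constructor <;> nlinarith
        omega
      rcases hq with rfl | rfl <;> omega
    · rintro (h | h)
      · exact ⟨0, by omega⟩
      · exact ⟨1, by omega⟩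
  have hdisj : Disjoint {p ∈ R | p.1 + 2 * p.2 = s + 3 * l - 1}
      {p ∈ R | p.1 + 2 * p.2 + s + 2 = 3 * l} := by
    rw [disjoint_filter]
    intro p hp h1 h2
    have := hmem hp
    omega
  have hreflect : #{p ∈ R | p.1 + 2 * p.2 = s + 3 * l - 1} =
      #{p ∈ R | p.1 + 2 * p.2 + s + 2 = 3 * l} := by
    rw [← card_filter_range_product_reflect (2 * l) (fun p => p.1 + 2 * p.2 + s + 2 = 3 * l)]
    refine congrArg card (filter_congr fun p hp => ?_)
    have := hmem hp
    dsimp only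
    omega
  have hcount : #{p ∈ R | p.1 + 2 * p.2 + s + 2 = 3 * l} =
      if s + 1 < 3 * l then (3 * l - s) / 2 else 0 := by
    split_ifs with h
    · rw [filter_congr (q := fun p : ℕ × ℕ => p.1 + 2 * p.2 = 3 * l - s - 2) (fun p _ => by omega),
        card_filter_add_two_mul_eq (by omega)]
      omega
    · rw [card_eq_zero, filter_eq_empty_iff]
      intro p _
      omega
  rw [hdvd, card_union_of_disjoint hdisj, hreflect, hcount]
  split_ifs <;> omega

theorem sum_neg_one_pow_mul_sin_ratio_mul_sin_ratio {N s : ℕ} (hs : N = 2 * s + 1) {l : ℕ}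
    (hl : l ≤ s) :
    ∑ n ∈ Icc 1 (N - 1),
      (-1 : ℝ) ^ n * (Real.sin (2 * n * l * π / N) / Real.sin (n * π / N)) *
        (Real.sin (4 * n * l * π / N) / Real.sin (2 * n * π / N)) =
      N * ((if s + 1 < 3 * l then 2 * ((3 * l - s) / 2) else 0 : ℕ) : ℝ) - 4 * l ^ 2 := by
  apply Complex.ofReal_injective
  push_cast
  rw [Icc_sub_one_right_eq_Ico_of_not_isMin (by simp; omega),
    sum_congr rfl fun n hn => neg_one_pow_mul_sin_ratio_mul_sin_ratio hs l (mem_Ico.1 hn).1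
      (mem_Ico.1 hn).2, sum_comm]
  simp only [(Complex.isPrimitiveRoot_exp N (by omega)).sum_Ico_one_pow_zpow (by omega : 1 ≤ N),
    sum_sub_distrib, sum_ite, sum_const_zero, add_zero, sum_const,
    card_filter_dvd_pairExponent hs hl, card_product, card_range, nsmul_eq_mul]
  split_ifs <;> push_cast <;> ring

theorem F2_sum_closed_form_general (N l : ℕ) (hNodd : Odd N)
    (hl2 : l ≤ (N - 1) / 2) :
    ∑ n ∈ Finset.Icc 1 (N - 1),
      (-1 : ℝ) ^ n * (Real.sin (2 * n * l * Real.pi / N) / Real.sin (n * Real.pi / N)) *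
        (Real.sin (4 * n * l * Real.pi / N) / Real.sin (2 * n * Real.pi / N))
    = -(1 / 2) * (3 * (l : ℝ)) * (3 * (l : ℝ) - 1)
      + (1 / 2) * (l : ℝ) * ((l : ℝ) - 1)
      - l
      + (if 3 * l > (N + 1) / 2 then
          (N : ℝ) * (3 * (l : ℝ) - ((N : ℝ) + 1) / 2 +
            (1 / 2) * (1 - (-1 : ℝ) ^ ((l : ℤ) - (((N + 1) / 2 : ℕ) : ℤ))))
        else 0) := by
  obtain ⟨s, hs⟩ := hNodd
  rw [sum_neg_one_pow_mul_sin_ratio_mul_sin_ratio hs (by omega),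
    show (N + 1) / 2 = s + 1 by omega]
  have hNR : (N : ℝ) = 2 * s + 1 := by exact_mod_cast hs
  split_ifs with h
  · rcases Nat.even_or_odd (l + s) with ⟨m, hm⟩ | ⟨m, hm⟩
    · rw [Odd.neg_one_zpow ⟨(m : ℤ) - s - 1, by push_cast; omega⟩,
        show 2 * ((3 * l - s) / 2) = 3 * l - s by omega, Nat.cast_sub (by omega), hNR]
      push_cast
      ring
    · rw [Even.neg_one_zpow ⟨(m : ℤ) - s, by push_cast; omega⟩,
        show 2 * ((3 * l - s) / 2) = 3 * l - (s + 1) by omega, Nat.cast_sub (by omega), hNR]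
      push_cast
      ring
  · push_cast
    ring

theorem F2_sum_closed_form (N l : ℕ) (hN : 3 ≤ N) (hNodd : Odd N)
    (hl1 : 1 ≤ l) (hl2 : l ≤ (N - 1) / 2) :
    ∑ n ∈ Finset.Icc 1 (N - 1),
      (-1 : ℝ) ^ n * (Real.sin (2 * n * l * Real.pi / N) / Real.sin (n * Real.pi / N)) *
        (Real.sin (4 * n * l * Real.pi / N) / Real.sin (2 * n * Real.pi / N))
    = -(1 / 2) * (3 * (l : ℝ)) * (3 * (l : ℝ) - 1)
      + (1 / 2) * (l : ℝ) * ((l : ℝ) - 1)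
      - l
      + (if 3 * l > (N + 1) / 2 then
          (N : ℝ) * (3 * (l : ℝ) - ((N : ℝ) + 1) / 2 +
            (1 / 2) * (1 - (-1 : ℝ) ^ ((l : ℤ) - (((N + 1) / 2 : ℕ) : ℤ))))
        else 0) :=
  F2_sum_closed_form_general N l hNodd hl2
end
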